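/- Let P be the path on vertices v_0,...,v_n with weight ω, and let L be a waterfall list that is 'good' (|L(i)| ≥ ω(i) + ω(i+1) for all 1 ≤ i ≤ n−1) and satisfies |L(n)| ≥ ω(n). Then P is (L,ω)-choosable if and only if for every j ∈ {0,...,n}, |⋃_{k=0}^{j} L(k)| ≥ Σ_{k=0}^{j} ω(k). -/

import Mathlib

def PathChoosable (n : ℕ) (L : ℕ → Finset ℕ) (ω : ℕ → ℕ) : Prop :=
  ∃ c : ℕ → Finset ℕ, (∀ i ≤ n, c i ⊆ L i ∧ (c i).card = ω i) ∧
    ∀ i, i < n → Disjoint (c i) (c (i + 1))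

def Waterfall (n : ℕ) (L : ℕ → Finset ℕ) : Prop :=
  ∀ i ≤ n, ∀ j ≤ n, i + 2 ≤ j → Disjoint (L i) (L j)
/-!
Necessity: in a choice `c`, adjacent sets are disjoint by definition and sets at distance
at least two are disjoint because the lists are, so `c 0, …, c j` are pairwise disjoint
subsets of `L 0 ∪ ⋯ ∪ L j`.

Sufficiency, by induction on `n`: choose `C ⊆ L n` of size `ω n` meeting `L (n - 1)` as little
as possible, i.e. either missing it or containing all of `L n \ L (n - 1)`, and delete `C` from
`L (n - 1)`. Since `L n` misses all earlier lists, only the prefix union up to `n - 1` changes,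
to `(L 0 ∪ ⋯ ∪ L (n - 1)) \ C`. In the first case nothing is lost; in the second this set
contains `(L 0 ∪ ⋯ ∪ L n) \ C`, of size at least `∑_{k ≤ n} ω k - ω n`. Goodness at `n - 1`
keeps `|L (n - 1) \ C| ≥ ω (n - 1)`, so the shorter path is choosable and `C` extends the choice.
-/

open Finset Function

lemma exists_subset_card_eq_disjoint_or_sdiff_subset {α : Type*} [DecidableEq α]
    {S : Finset α} (T : Finset α) {m : ℕ} (hm : m ≤ #S) :
    ∃ C ⊆ S, #C = m ∧ (Disjoint C T ∨ S \ T ⊆ C) := by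
  by_cases hmT : m ≤ #(S \ T)
  · obtain ⟨C, hCS, rfl⟩ := exists_subset_card_eq hmT
    exact ⟨C, hCS.trans sdiff_subset, rfl, Or.inl (sdiff_disjoint.mono_left hCS)⟩
  · have hsplit := card_sdiff_add_card_inter S T
    obtain ⟨B, hB, hBcard⟩ := exists_subset_card_eq (s := S ∩ T) (n := m - #(S \ T)) (by omega)
    have hdisj : Disjoint (S \ T) B := sdiff_disjoint.mono_right (hB.trans inter_subset_right)
    refine ⟨S \ T ∪ B, union_subset sdiff_subset (hB.trans inter_subset_left), ?_,
      Or.inr subset_union_left⟩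
    rw [card_union_of_disjoint hdisj, hBcard]
    omega

lemma update_sdiff_subset {α : Type*} [DecidableEq α] (L : ℕ → Finset α) (m : ℕ)
    (C : Finset α) (i : ℕ) : update L m (L m \ C) i ⊆ L i := by
  rcases eq_or_ne i m with rfl | hi
  · simp
  · simp [hi]

section

variable {n : ℕ} {L : ℕ → Finset ℕ} {ω : ℕ → ℕ}

lemma Waterfall.mono {m : ℕ} {L' : ℕ → Finset ℕ} (hw : Waterfall n L) (hmn : m ≤ n)
    (hL : ∀ i, L' i ⊆ L i) : Waterfall m L' :=
  fun i hi j hj hij => (hw i (by omega) j (by omega) hij).mono (hL i) (hL j)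

lemma Waterfall.pairwiseDisjoint {c : ℕ → Finset ℕ} (hw : Waterfall n L)
    (hcL : ∀ i ≤ n, c i ⊆ L i) (hadj : ∀ i < n, Disjoint (c i) (c (i + 1))) :
    (↑(Icc 0 n) : Set ℕ).PairwiseDisjoint c := by
  have hlt : ∀ i j, j ≤ n → i < j → Disjoint (c i) (c j) := by
    intro i j hj hij
    obtain rfl | hij2 := eq_or_lt_of_le (Nat.succ_le_of_lt hij)
    · exact hadj i (by omega)
    · exact (hw i (by omega) j hj hij2).mono (hcL i (by omega)) (hcL j hj)
  intro i hi j hj hij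
  simp only [coe_Icc, Set.mem_Icc] at hi hj
  obtain hij | hji := lt_or_gt_of_ne hij
  · exact hlt i j hj.2 hij
  · exact (hlt j i hi.2 hji).symm

lemma PathChoosable.sum_le_card_biUnion (hw : Waterfall n L) (h : PathChoosable n L ω)
    {j : ℕ} (hj : j ≤ n) : ∑ k ∈ Icc 0 j, ω k ≤ #((Icc 0 j).biUnion L) := by
  obtain ⟨c, hc, hadj⟩ := h
  have hdisj : (↑(Icc 0 j) : Set ℕ).PairwiseDisjoint c :=
    (hw.pairwiseDisjoint (fun i hi => (hc i hi).1) hadj).subset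
      (coe_subset.mpr (Icc_subset_Icc_right hj))
  calc ∑ k ∈ Icc 0 j, ω k = ∑ k ∈ Icc 0 j, #(c k) :=
        sum_congr rfl fun k hk => ((hc k (by simp at hk; omega)).2).symm
    _ = #((Icc 0 j).biUnion c) := (card_biUnion hdisj).symm
    _ ≤ #((Icc 0 j).biUnion L) :=
        card_le_card <| biUnion_mono fun k hk => (hc k (by simp at hk; omega)).1

lemma PathChoosable.of_update_sdiff {m : ℕ} {C : Finset ℕ} (hCL : C ⊆ L (m + 1))
    (hCcard : #C = ω (m + 1)) (h : PathChoosable m (update L m (L m \ C)) ω) :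
    PathChoosable (m + 1) L ω := by
  obtain ⟨c, hc, hadj⟩ := h
  refine ⟨update c (m + 1) C, fun i hi => ?_, fun i hi => ?_⟩
  · obtain rfl | hi := eq_or_lt_of_le hi
    · simpa using ⟨hCL, hCcard⟩
    · rw [update_of_ne (by omega)]
      exact ⟨(hc i (by omega)).1.trans (update_sdiff_subset L m C i), (hc i (by omega)).2⟩
  · obtain hi | rfl := Nat.lt_succ_iff_lt_or_eq.mp hi
    · rw [update_of_ne (by omega), update_of_ne (by omega)]
      exact hadj i hi
    · rw [update_of_ne (by omega), update_self]
      exact sdiff_disjoint.mono_left (by simpa using (hc i le_rfl).1)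

lemma biUnion_Icc_update_sdiff {m : ℕ} {C : Finset ℕ} (hw : Waterfall (m + 1) L)
    (hCL : C ⊆ L (m + 1)) :
    (Icc 0 m).biUnion (update L m (L m \ C)) = (Icc 0 m).biUnion L \ C := by
  ext x
  simp only [mem_biUnion, mem_Icc, mem_sdiff, zero_le, true_and]
  constructor
  · rintro ⟨k, hk, hx⟩
    rcases eq_or_ne k m with rfl | hkm
    · simp only [update_self, mem_sdiff] at hx
      exact ⟨⟨k, le_rfl, hx.1⟩, hx.2⟩
    · rw [update_of_ne hkm] at hx
      exact ⟨⟨k, hk, hx⟩, fun hxC =>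
        disjoint_left.mp (hw k (by omega) (m + 1) le_rfl (by omega)) hx (hCL hxC)⟩
  · rintro ⟨⟨k, hk, hx⟩, hxC⟩
    refine ⟨k, hk, ?_⟩
    rcases eq_or_ne k m with rfl | hkm
    · simpa using ⟨hx, hxC⟩
    · rwa [update_of_ne hkm]

lemma sum_le_card_biUnion_Icc_update_sdiff {m : ℕ} {C : Finset ℕ} (hw : Waterfall (m + 1) L)
    (hCL : C ⊆ L (m + 1)) (hCcard : #C = ω (m + 1))
    (hC : Disjoint C (L m) ∨ L (m + 1) \ L m ⊆ C)
    (hpre : ∀ j ≤ m + 1, ∑ k ∈ Icc 0 j, ω k ≤ #((Icc 0 j).biUnion L)) {j : ℕ} (hj : j ≤ m) :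
    ∑ k ∈ Icc 0 j, ω k ≤ #((Icc 0 j).biUnion (update L m (L m \ C))) := by
  obtain hj | rfl := lt_or_eq_of_le hj
  · have hsame : ∀ k ∈ Icc 0 j, update L m (L m \ C) k = L k := fun k hk =>
      update_of_ne (by rw [mem_Icc] at hk; omega) _ _
    rw [biUnion_congr rfl hsame]
    exact hpre j (by omega)
  rw [biUnion_Icc_update_sdiff hw hCL]
  rcases hC with hmiss | hcover
  · have hdisj : Disjoint ((Icc 0 j).biUnion L) C := by
      refine (disjoint_biUnion_left _ _ _).mpr fun k hk => ?_
      rw [mem_Icc] at hk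
      rcases eq_or_ne k j with rfl | hkj
      · exact hmiss.symm
      · exact (hw k (by omega) (j + 1) le_rfl (by omega)).mono_right hCL
    rw [sdiff_eq_self_of_disjoint hdisj]
    exact hpre j (by omega)
  · have hshrink : (Icc 0 (j + 1)).biUnion L \ C ⊆ (Icc 0 j).biUnion L \ C := by
      intro x hx
      simp only [mem_sdiff, mem_biUnion, mem_Icc, zero_le, true_and] at hx ⊢
      obtain ⟨⟨k, hk, hxk⟩, hxC⟩ := hx
      refine ⟨?_, hxC⟩
      obtain hk | rfl := Nat.le_succ_iff.mp hk
      · exact ⟨k, hk, hxk⟩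
      · exact ⟨j, le_rfl, by_contra fun hxj => hxC (hcover (mem_sdiff.mpr ⟨hxk, hxj⟩))⟩
    have hlong := hpre (j + 1) le_rfl
    rw [sum_Icc_succ_top (Nat.zero_le _)] at hlong
    calc ∑ k ∈ Icc 0 j, ω k ≤ #((Icc 0 (j + 1)).biUnion L) - #C := by omega
      _ ≤ #((Icc 0 (j + 1)).biUnion L \ C) := le_card_sdiff _ _
      _ ≤ #((Icc 0 j).biUnion L \ C) := card_le_card hshrink

theorem pathChoosable_of_sum_le_card_biUnion (hw : Waterfall n L)
    (hgood : ∀ i, 1 ≤ i → i ≤ n - 1 → ω i + ω (i + 1) ≤ #(L i)) (hlast : ω n ≤ #(L n))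
    (hpre : ∀ j ≤ n, ∑ k ∈ Icc 0 j, ω k ≤ #((Icc 0 j).biUnion L)) : PathChoosable n L ω := by
  induction n generalizing L with
  | zero =>
    obtain ⟨c, hcL, hc⟩ := exists_subset_card_eq hlast
    exact ⟨fun _ => c, fun i hi => by obtain rfl := Nat.le_zero.mp hi; exact ⟨hcL, hc⟩,
      fun i hi => absurd hi i.not_lt_zero⟩
  | succ m ih =>
    obtain ⟨C, hCL, hCcard, hC⟩ := exists_subset_card_eq_disjoint_or_sdiff_subset (L m) hlast
    have hpre' := fun j (hj : j ≤ m) =>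
      sum_le_card_biUnion_Icc_update_sdiff hw hCL hCcard hC hpre hj
    have hlast' : ω m ≤ #(update L m (L m \ C) m) := by
      rcases Nat.eq_zero_or_pos m with rfl | hm
      · simpa using hpre' 0 le_rfl
      · have hgood_m := hgood m hm (by omega)
        have hcard := le_card_sdiff C (L m)
        rw [update_self]
        omega
    refine PathChoosable.of_update_sdiff hCL hCcard
      (ih (hw.mono (by omega) (update_sdiff_subset L m C)) (fun i hi1 hi2 => ?_) hlast' hpre')
    rw [update_of_ne (by omega)]
    exact hgood i hi1 (by omega)

end

theorem good_waterfall_choosable_iff (n : ℕ) (L : ℕ → Finset ℕ) (ω : ℕ → ℕ)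
    (hw : Waterfall n L)
    (hgood : ∀ i, 1 ≤ i → i ≤ n - 1 → (L i).card ≥ ω i + ω (i + 1))
    (hlast : (L n).card ≥ ω n) :
    PathChoosable n L ω ↔
      ∀ j ≤ n, ((Finset.Icc 0 j).biUnion L).card ≥ ∑ k ∈ Finset.Icc 0 j, ω k :=
  ⟨fun h _ hj => h.sum_le_card_biUnion hw hj,
    pathChoosable_of_sum_le_card_biUnion hw hgood hlast⟩
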